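/- The operator H is skew-symmetric: for bounded vector fields u, w ∈ V∞, ⟨u, Hw⟩ = -⟨Hu, w⟩, where ⟨u,v⟩ = (1/2)Σ_k ∫ u_k v_k dπ. -/

import Mathlib

/-! Since `(∂_k + 2I) w_l = w_l ∘ τ_{e_k} + w_l`, both pairings expand into double sums of
integrals `∫ h_{k,l} f g dπ`. In a term where one factor is shifted by `τ_{e_k}`, invariance of
`π` moves the shift onto the other two factors, and the antisymmetry of `h` under `k ↦ -k` (or
`l ↦ -l`) together with that of `u` (or `w`) absorbs it at the price of replacing `k` by `-k`.
After reindexing, and using `h_{k,l} = -h_{l,k}`, every double sum becomes `±S` with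
`S = ∑_{k,l} ∫ h_{k,l} u_k w_l dπ`: the left side is `S / 2` and the right side `-S / 2`. -/

open MeasureTheory Filter Topology

/-- The unit vector of `ℤ^d` indexed by a coordinate and a sign. -/
def unitVec (d : ℕ) (k : Fin d × Bool) : Fin d → ℤ :=
  fun j => if j = k.1 then (if k.2 then 1 else -1) else 0

/-- Negation `k ↦ -k` on the index set `U` of unit vectors. -/
def negU {d : ℕ} (k : Fin d × Bool) : Fin d × Bool := (k.1, !k.2)

/-- The operator `H` on vector fields: `(Hu)_k = (1/2) ∑_l h_{k,l} (∂_k + 2I) u_l`. -/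
noncomputable def Hop (d : ℕ) {Ω : Type*} (τ : (Fin d → ℤ) → Ω → Ω)
    (h : (Fin d × Bool) → (Fin d × Bool) → Ω → ℝ)
    (u : (Fin d × Bool) → Ω → ℝ) (k : Fin d × Bool) (ω : Ω) : ℝ :=
  (1/2) * ∑ l : Fin d × Bool,
    h k l ω * ((u l (τ (unitVec d k) ω) - u l ω) + 2 * u l ω)

open scoped ENNReal

theorem negU_involutive (d : ℕ) : Function.Involutive (negU (d := d)) := fun _ => by
  simp [negU]

theorem sum_negU {d : ℕ} {M : Type*} [AddCommMonoid M] (f : Fin d × Bool → M) :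
    ∑ k, f (negU k) = ∑ k, f k :=
  Equiv.sum_comp (negU_involutive d).toPerm f

section Integration

variable {Ω : Type*} [MeasurableSpace Ω] {μ : Measure Ω}

theorem MeasureTheory.MeasurePreserving.integral_mul_mul_comp_of_ae_eq_neg_comp {T : Ω → Ω}
    (hT : MeasurePreserving T μ μ) {a b c A B : Ω → ℝ}
    (ha : ∀ᵐ ω ∂μ, a ω = -A (T ω)) (hb : ∀ᵐ ω ∂μ, b ω = -B (T ω))
    (hm : AEStronglyMeasurable (fun ω => A ω * B ω * c ω) μ) :
    ∫ ω, a ω * b ω * c (T ω) ∂μ = ∫ ω, A ω * B ω * c ω ∂μ := by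
  calc ∫ ω, a ω * b ω * c (T ω) ∂μ = ∫ ω, A (T ω) * B (T ω) * c (T ω) ∂μ := by
        refine integral_congr_ae ?_
        filter_upwards [ha, hb] with ω ha hb
        rw [ha, hb]
        ring
    _ = ∫ ω, A ω * B ω * c ω ∂(μ.map T) :=
        (integral_map hT.aemeasurable (hT.map_eq ▸ hm)).symm
    _ = ∫ ω, A ω * B ω * c ω ∂μ := by rw [hT.map_eq]

theorem sum_integral_eq_half_mul_add {ι κ : Type*} [Fintype ι] [Fintype κ]
    {F : ι → Ω → ℝ} {X Y : ι → κ → Ω → ℝ}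
    (hF : ∀ i ω, F i ω = (1/2) * ∑ j, (X i j ω + Y i j ω))
    (hX : ∀ i j, Integrable (X i j) μ) (hY : ∀ i j, Integrable (Y i j) μ) :
    ∑ i, ∫ ω, F i ω ∂μ
      = (1/2) * (∑ i, ∑ j, ∫ ω, X i j ω ∂μ + ∑ i, ∑ j, ∫ ω, Y i j ω ∂μ) := by
  simp only [hF, integral_const_mul, ← Finset.mul_sum, ← Finset.sum_add_distrib]
  congr 1
  refine Finset.sum_congr rfl fun i _ => ?_
  rw [integral_finsetSum (f := fun j ω => X i j ω + Y i j ω) _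
    fun j _ => (hX i j).add (hY i j)]
  exact Finset.sum_congr rfl fun j _ => integral_add (hX i j) (hY i j)

theorem memLp_top_of_forall_abs_le {ι : Type*} {f : ι → Ω → ℝ} (hf : ∀ i, Measurable (f i))
    (hbd : ∃ C, ∀ i ω, |f i ω| ≤ C) (i : ι) : MemLp (f i) ∞ μ := by
  obtain ⟨C, hC⟩ := hbd
  exact memLp_top_of_bound (hf i).aestronglyMeasurable C (ae_of_all _ (hC i))

theorem MeasureTheory.Integrable.mul_mul_of_top {a b c : Ω → ℝ} (ha : Integrable a μ)
    (hb : MemLp b ∞ μ) (hc : MemLp c ∞ μ) : Integrable (fun ω => a ω * b ω * c ω) μ :=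
  (ha.mul_of_top_left hb).mul_of_top_left hc

theorem integral_mul_mul_eq_neg_of_ae_eq_neg {a A : Ω → ℝ} (ha : ∀ᵐ ω ∂μ, a ω = -A ω)
    (b c : Ω → ℝ) : ∫ ω, a ω * b ω * c ω ∂μ = -∫ ω, A ω * b ω * c ω ∂μ := by
  rw [← integral_neg]
  refine integral_congr_ae ?_
  filter_upwards [ha] with ω ha
  rw [ha]
  ring

end Integration

section Hop

variable {d : ℕ} {Ω : Type*} [MeasurableSpace Ω] {π : Measure Ω} {τ : (Fin d → ℤ) → Ω → Ω}
  {h : (Fin d × Bool) → (Fin d × Bool) → Ω → ℝ} {u w : (Fin d × Bool) → Ω → ℝ}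

theorem sum_integral_mul_Hop
    (hX : ∀ k l, Integrable (fun ω => h k l ω * u k ω * w l (τ (unitVec d k) ω)) π)
    (hY : ∀ k l, Integrable (fun ω => h k l ω * u k ω * w l ω) π) :
    ∑ k, ∫ ω, u k ω * Hop d τ h w k ω ∂π
      = (1/2) * (∑ k, ∑ l, ∫ ω, h k l ω * u k ω * w l (τ (unitVec d k) ω) ∂π
        + ∑ k, ∑ l, ∫ ω, h k l ω * u k ω * w l ω ∂π) :=
  sum_integral_eq_half_mul_add (fun k ω => by
    simp only [Hop, Finset.mul_sum]
    exact Finset.sum_congr rfl fun l _ => by ring) hX hY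

theorem sum_integral_Hop_mul
    (hX : ∀ k l, Integrable (fun ω => h k l ω * u l (τ (unitVec d k) ω) * w k ω) π)
    (hY : ∀ k l, Integrable (fun ω => h k l ω * u l ω * w k ω) π) :
    ∑ k, ∫ ω, Hop d τ h u k ω * w k ω ∂π
      = (1/2) * (∑ k, ∑ l, ∫ ω, h k l ω * u l (τ (unitVec d k) ω) * w k ω ∂π
        + ∑ k, ∑ l, ∫ ω, h k l ω * u l ω * w k ω ∂π) :=
  sum_integral_eq_half_mul_add (fun k ω => by
    simp only [Hop, Finset.sum_mul, Finset.mul_sum]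
    exact Finset.sum_congr rfl fun l _ => by ring) hX hY

theorem sum_integral_mul_shift_eq (hmp : ∀ z, MeasurePreserving (τ z) π π)
    (hA1 : ∀ k l, ∀ᵐ ω ∂π, h k l ω = - h (negU k) l (τ (unitVec d k) ω))
    (huV : ∀ k, ∀ᵐ ω ∂π, u k ω + u (negU k) (τ (unitVec d k) ω) = 0)
    (hhm : ∀ k l, AEStronglyMeasurable (h k l) π) (hum : ∀ k, AEStronglyMeasurable (u k) π)
    (hwm : ∀ k, AEStronglyMeasurable (w k) π) :
    ∑ k, ∑ l, ∫ ω, h k l ω * u k ω * w l (τ (unitVec d k) ω) ∂π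
      = ∑ k, ∑ l, ∫ ω, h k l ω * u k ω * w l ω ∂π := by
  rw [← sum_negU fun k => ∑ l, ∫ ω, h k l ω * u k ω * w l ω ∂π]
  refine Finset.sum_congr rfl fun k _ => Finset.sum_congr rfl fun l _ => ?_
  exact (hmp _).integral_mul_mul_comp_of_ae_eq_neg_comp (hA1 k l)
    ((huV k).mono fun ω hω => eq_neg_of_add_eq_zero_left hω)
    (((hhm _ l).mul (hum _)).mul (hwm l))

theorem sum_integral_swap_eq_neg (hA3 : ∀ k l, ∀ᵐ ω ∂π, h k l ω = - h l k ω) :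
    ∑ k, ∑ l, ∫ ω, h k l ω * u l ω * w k ω ∂π
      = -∑ k, ∑ l, ∫ ω, h k l ω * u k ω * w l ω ∂π := by
  simp_rw [fun k l => integral_mul_mul_eq_neg_of_ae_eq_neg (μ := π) (hA3 k l) (u l) (w k),
    Finset.sum_neg_distrib]
  rw [Finset.sum_comm]

theorem sum_integral_shift_mul_eq_neg (hmp : ∀ z, MeasurePreserving (τ z) π π)
    (hA2 : ∀ k l, ∀ᵐ ω ∂π, h k l ω = - h k (negU l) (τ (unitVec d l) ω))
    (hA3 : ∀ k l, ∀ᵐ ω ∂π, h k l ω = - h l k ω)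
    (hwV : ∀ k, ∀ᵐ ω ∂π, w k ω + w (negU k) (τ (unitVec d k) ω) = 0)
    (hhm : ∀ k l, AEStronglyMeasurable (h k l) π) (hum : ∀ k, AEStronglyMeasurable (u k) π)
    (hwm : ∀ k, AEStronglyMeasurable (w k) π) :
    ∑ k, ∑ l, ∫ ω, h k l ω * u l (τ (unitVec d k) ω) * w k ω ∂π
      = -∑ k, ∑ l, ∫ ω, h k l ω * u k ω * w l ω ∂π := by
  have hshift : ∀ k l, ∫ ω, h l k ω * u l (τ (unitVec d k) ω) * w k ω ∂π
      = ∫ ω, h l (negU k) ω * u l ω * w (negU k) ω ∂π := fun k l => by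
    calc _ = ∫ ω, h l k ω * w k ω * u l (τ (unitVec d k) ω) ∂π := by
          congr 1 with ω; ring
      _ = ∫ ω, h l (negU k) ω * w (negU k) ω * u l ω ∂π :=
          (hmp _).integral_mul_mul_comp_of_ae_eq_neg_comp (hA2 l k)
            ((hwV k).mono fun ω hω => eq_neg_of_add_eq_zero_left hω)
            (((hhm l _).mul (hwm _)).mul (hum l))
      _ = _ := by congr 1 with ω; ring
  simp_rw [fun k l => integral_mul_mul_eq_neg_of_ae_eq_neg (hA3 k l)
    (fun ω => u l (τ (unitVec d k) ω)) (w k), hshift, Finset.sum_neg_distrib]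
  rw [sum_negU fun k => ∑ l, ∫ ω, h l k ω * u l ω * w k ω ∂π, Finset.sum_comm]

end Hop

theorem Hop_skew_symmetric_general
    (d : ℕ) (Ω : Type*) [MeasurableSpace Ω] (π : Measure Ω) [IsProbabilityMeasure π]
    (τ : (Fin d → ℤ) → Ω → Ω)
    (hmp : ∀ z, MeasurePreserving (τ z) π π)
    (h : (Fin d × Bool) → (Fin d × Bool) → Ω → ℝ)
    (hhL2 : ∀ k l, MemLp (h k l) 2 π)
    (hA1 : ∀ k l, ∀ᵐ ω ∂π, h k l ω = - h (negU k) l (τ (unitVec d k) ω))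
    (hA2 : ∀ k l, ∀ᵐ ω ∂π, h k l ω = - h k (negU l) (τ (unitVec d l) ω))
    (hA3 : ∀ k l, ∀ᵐ ω ∂π, h k l ω = - h l k ω)
    (u w : (Fin d × Bool) → Ω → ℝ)
    (humeas : ∀ k, Measurable (u k)) (hwmeas : ∀ k, Measurable (w k))
    (hubd : ∃ C, ∀ k ω, |u k ω| ≤ C) (hwbd : ∃ C, ∀ k ω, |w k ω| ≤ C)
    (huV : ∀ k, ∀ᵐ ω ∂π, u k ω + u (negU k) (τ (unitVec d k) ω) = 0)
    (hwV : ∀ k, ∀ᵐ ω ∂π, w k ω + w (negU k) (τ (unitVec d k) ω) = 0) :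
    (1/2) * ∑ k : Fin d × Bool, ∫ ω, u k ω * Hop d τ h w k ω ∂π
      = - ((1/2) * ∑ k : Fin d × Bool, ∫ ω, Hop d τ h u k ω * w k ω ∂π) := by
  have hh : ∀ k l, Integrable (h k l) π := fun k l => (hhL2 k l).integrable one_le_two
  have hu : ∀ k, MemLp (u k) ∞ π := memLp_top_of_forall_abs_le humeas hubd
  have hw : ∀ k, MemLp (w k) ∞ π := memLp_top_of_forall_abs_le hwmeas hwbd
  have hhm k l := (hh k l).aestronglyMeasurable
  have hum k := (hu k).aestronglyMeasurable
  have hwm k := (hw k).aestronglyMeasurable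
  rw [sum_integral_mul_Hop
      (fun k l => (hh k l).mul_mul_of_top (hu k) ((hw l).comp_measurePreserving (hmp _)))
      (fun k l => (hh k l).mul_mul_of_top (hu k) (hw l)),
    sum_integral_Hop_mul
      (fun k l => (hh k l).mul_mul_of_top ((hu l).comp_measurePreserving (hmp _)) (hw k))
      (fun k l => (hh k l).mul_mul_of_top (hu l) (hw k)),
    sum_integral_mul_shift_eq hmp hA1 huV hhm hum hwm,
    sum_integral_shift_mul_eq_neg hmp hA2 hA3 hwV hhm hum hwm,
    sum_integral_swap_eq_neg hA3]
  ring

/-- `H` is skew-symmetric: for essentially bounded antisymmetric vector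
fields `u, w ∈ V∞`, `⟨u, Hw⟩ = -⟨Hu, w⟩` where `⟨u,v⟩ = (1/2)∑_k ∫ u_k v_k dπ`. -/
theorem Hop_skew_symmetric
    (d : ℕ) (Ω : Type*) [MeasurableSpace Ω] (π : Measure Ω) [IsProbabilityMeasure π]
    (τ : (Fin d → ℤ) → Ω → Ω)
    (hτ0 : τ 0 = id)
    (hτadd : ∀ z w : Fin d → ℤ, τ (z + w) = τ z ∘ τ w)
    (hmp : ∀ z, MeasurePreserving (τ z) π π)
    (h : (Fin d × Bool) → (Fin d × Bool) → Ω → ℝ)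
    (hhmeas : ∀ k l, Measurable (h k l))
    (hhL2 : ∀ k l, MemLp (h k l) 2 π)
    (hA1 : ∀ k l, ∀ᵐ ω ∂π, h k l ω = - h (negU k) l (τ (unitVec d k) ω))
    (hA2 : ∀ k l, ∀ᵐ ω ∂π, h k l ω = - h k (negU l) (τ (unitVec d l) ω))
    (hA3 : ∀ k l, ∀ᵐ ω ∂π, h k l ω = - h l k ω)
    (u w : (Fin d × Bool) → Ω → ℝ)
    (humeas : ∀ k, Measurable (u k)) (hwmeas : ∀ k, Measurable (w k))
    (hubd : ∃ C, ∀ k ω, |u k ω| ≤ C) (hwbd : ∃ C, ∀ k ω, |w k ω| ≤ C)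
    (huV : ∀ k, ∀ᵐ ω ∂π, u k ω + u (negU k) (τ (unitVec d k) ω) = 0)
    (hwV : ∀ k, ∀ᵐ ω ∂π, w k ω + w (negU k) (τ (unitVec d k) ω) = 0) :
    (1/2) * ∑ k : Fin d × Bool, ∫ ω, u k ω * Hop d τ h w k ω ∂π
      = - ((1/2) * ∑ k : Fin d × Bool, ∫ ω, Hop d τ h u k ω * w k ω ∂π) :=
  Hop_skew_symmetric_general d Ω π τ hmp h hhL2 hA1 hA2 hA3 u w humeas hwmeas hubd hwbd huV hwV
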